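/- arXiv:1904.13326 — 5 statements merged into one kernel-verified Lean document; each statement's English description precedes it below -/
import Mathlib

section
/- Let A, B, C, D be real matrices of appropriate sizes and X a Hermitian complex matrix with real part X_Re. Define W(X) as the block matrix [[-AᵀX - XA, Cᵀ - XB],[C - BᵀX, Dᵀ + D]]. If W(X) is positive semidefinite (resp. positive definite), then W(X_Re) is positive semidefinite (resp. positive definite). -/
/-!
Taking entrywise real parts maps `W(X)` to `W(X_Re)`, because `A, B, C, D` are real. For a real
vector `x`, the real quadratic form of `M.map re` at `x` is the real part of the Hermitian form of
`M` at `x`, so positivity of the complex form passes to the real one.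
-/

open Matrix
open scoped ComplexOrder

namespace Matrix

variable {k l p : Type*}

lemma conjTranspose_map_ofReal (M : Matrix l k ℝ) :
    (M.map Complex.ofReal)ᴴ = Mᵀ.map Complex.ofReal := by
  ext i j
  simp

lemma IsHermitian.map_re {M : Matrix k k ℂ} (hM : M.IsHermitian) :
    (M.map Complex.re).IsHermitian :=
  hM.map _ fun z => by simp

variable [Fintype k]

lemma re_dotProduct_mulVec_ofReal (M : Matrix k k ℂ) (x : k → ℝ) :
    (star (Complex.ofReal ∘ x) ⬝ᵥ M *ᵥ (Complex.ofReal ∘ x)).re = x ⬝ᵥ M.map Complex.re *ᵥ x := by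
  simp [dotProduct, mulVec, Complex.re_sum, Complex.mul_re, Finset.mul_sum, mul_left_comm]

lemma PosSemidef.map_re {M : Matrix k k ℂ} (hM : M.PosSemidef) :
    (M.map Complex.re).PosSemidef := by
  refine posSemidef_iff_dotProduct_mulVec.2 ⟨hM.1.map_re, fun x => ?_⟩
  have hx := (posSemidef_iff_dotProduct_mulVec.1 hM).2 (Complex.ofReal ∘ x)
  rw [star_trivial, ← re_dotProduct_mulVec_ofReal]
  exact (Complex.nonneg_iff.1 hx).1

lemma PosDef.map_re {M : Matrix k k ℂ} (hM : M.PosDef) :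
    (M.map Complex.re).PosDef := by
  refine posDef_iff_dotProduct_mulVec.2 ⟨hM.1.map_re, fun x hx => ?_⟩
  have hx' : Complex.ofReal ∘ x ≠ 0 := fun h =>
    hx (funext fun i => Complex.ofReal_eq_zero.1 (congrFun h i))
  rw [star_trivial, ← re_dotProduct_mulVec_ofReal]
  exact (Complex.pos_iff.1 ((posDef_iff_dotProduct_mulVec.1 hM).2 hx')).1

lemma map_re_mul_map_ofReal (M : Matrix l k ℂ) (N : Matrix k p ℝ) :
    (M * N.map Complex.ofReal).map Complex.re = M.map Complex.re * N := by
  ext i j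
  simp [mul_apply, Complex.re_sum]

lemma map_re_map_ofReal_mul (M : Matrix l k ℝ) (N : Matrix k p ℂ) :
    (M.map Complex.ofReal * N).map Complex.re = M * N.map Complex.re := by
  ext i j
  simp [mul_apply, Complex.re_sum]

end Matrix

theorem stmt1_general {n m : ℕ}
    (A : Matrix (Fin n) (Fin n) ℝ) (B : Matrix (Fin n) (Fin m) ℝ)
    (C : Matrix (Fin m) (Fin n) ℝ) (D : Matrix (Fin m) (Fin m) ℝ)
    (X : Matrix (Fin n) (Fin n) ℂ) :
    (((Matrix.fromBlocks
        (-((A.map Complex.ofReal)ᴴ * X) - X * A.map Complex.ofReal)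
        ((C.map Complex.ofReal)ᴴ - X * B.map Complex.ofReal)
        (C.map Complex.ofReal - (B.map Complex.ofReal)ᴴ * X)
        ((D.map Complex.ofReal)ᴴ + D.map Complex.ofReal)).PosSemidef →
      (Matrix.fromBlocks
        (-(Aᵀ * X.map Complex.re) - X.map Complex.re * A)
        (Cᵀ - X.map Complex.re * B)
        (C - Bᵀ * X.map Complex.re)
        (Dᵀ + D)).PosSemidef)) ∧
    (((Matrix.fromBlocks
        (-((A.map Complex.ofReal)ᴴ * X) - X * A.map Complex.ofReal)
        ((C.map Complex.ofReal)ᴴ - X * B.map Complex.ofReal)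
        (C.map Complex.ofReal - (B.map Complex.ofReal)ᴴ * X)
        ((D.map Complex.ofReal)ᴴ + D.map Complex.ofReal)).PosDef →
      (Matrix.fromBlocks
        (-(Aᵀ * X.map Complex.re) - X.map Complex.re * A)
        (Cᵀ - X.map Complex.re * B)
        (C - Bᵀ * X.map Complex.re)
        (Dᵀ + D)).PosDef)) := by
  have hW : (Matrix.fromBlocks
        (-((A.map Complex.ofReal)ᴴ * X) - X * A.map Complex.ofReal)
        ((C.map Complex.ofReal)ᴴ - X * B.map Complex.ofReal)
        (C.map Complex.ofReal - (B.map Complex.ofReal)ᴴ * X)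
        ((D.map Complex.ofReal)ᴴ + D.map Complex.ofReal)).map Complex.re =
      Matrix.fromBlocks
        (-(Aᵀ * X.map Complex.re) - X.map Complex.re * A)
        (Cᵀ - X.map Complex.re * B)
        (C - Bᵀ * X.map Complex.re)
        (Dᵀ + D) := by
    simp only [fromBlocks_map, conjTranspose_map_ofReal,
      Matrix.map_sub _ Complex.sub_re, Matrix.map_neg _ Complex.neg_re,
      Matrix.map_add _ Complex.add_re, map_re_mul_map_ofReal, map_re_map_ofReal_mul,
      map_map, Function.comp_def, Complex.ofReal_re, map_id']
  rw [← hW]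
  exact ⟨PosSemidef.map_re, PosDef.map_re⟩

theorem stmt1 {n m : ℕ}
    (A : Matrix (Fin n) (Fin n) ℝ) (B : Matrix (Fin n) (Fin m) ℝ)
    (C : Matrix (Fin m) (Fin n) ℝ) (D : Matrix (Fin m) (Fin m) ℝ)
    (X : Matrix (Fin n) (Fin n) ℂ) (hX : X.IsHermitian) :
    (((Matrix.fromBlocks
        (-((A.map Complex.ofReal)ᴴ * X) - X * A.map Complex.ofReal)
        ((C.map Complex.ofReal)ᴴ - X * B.map Complex.ofReal)
        (C.map Complex.ofReal - (B.map Complex.ofReal)ᴴ * X)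
        ((D.map Complex.ofReal)ᴴ + D.map Complex.ofReal)).PosSemidef →
      (Matrix.fromBlocks
        (-(Aᵀ * X.map Complex.re) - X.map Complex.re * A)
        (Cᵀ - X.map Complex.re * B)
        (C - Bᵀ * X.map Complex.re)
        (Dᵀ + D)).PosSemidef)) ∧
    (((Matrix.fromBlocks
        (-((A.map Complex.ofReal)ᴴ * X) - X * A.map Complex.ofReal)
        ((C.map Complex.ofReal)ᴴ - X * B.map Complex.ofReal)
        (C.map Complex.ofReal - (B.map Complex.ofReal)ᴴ * X)
        ((D.map Complex.ofReal)ᴴ + D.map Complex.ofReal)).PosDef →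
      (Matrix.fromBlocks
        (-(Aᵀ * X.map Complex.re) - X.map Complex.re * A)
        (Cᵀ - X.map Complex.re * B)
        (C - Bᵀ * X.map Complex.re)
        (Dᵀ + D)).PosDef)) :=
  stmt1_general A B C D X
end

section
/- Let Ŵ be Hermitian positive definite, X̂ Hermitian positive definite, and suppose Δ is a matrix such that Ŵ + X̂Δ + ΔᴴX̂ is singular. Then ‖Δ‖₂ ≥ αβ/2, where α² = λ_min(Ŵ) and β² = λ_min(X̂⁻¹ Ŵ X̂⁻¹). -/
/-!
Take `v ≠ 0` in the kernel of `Ŵ + X̂Δ + ΔᴴX̂` and put `u = X̂v`. The quadratic form of that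
matrix at `v` vanishes, so `Q := v*Ŵv = -2 Re ⟨u, Δv⟩ ≤ 2‖Δ‖‖u‖‖v‖`. On the other hand
`Q ≥ α²‖v‖²` and, since `Q = u*(X̂⁻¹ŴX̂⁻¹)u`, also `Q ≥ β²‖u‖²`; hence `αβ‖u‖‖v‖ ≤ Q`.
-/

open Matrix
open scoped ComplexOrder

/-- The spectral norm (largest singular value) of a complex matrix. -/
noncomputable def specNorm {N : ℕ} (M : Matrix (Fin N) (Fin N) ℂ) : ℝ :=
  ‖Matrix.toEuclideanCLM (𝕜 := ℂ) M‖

open scoped MatrixOrder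

namespace Matrix

variable {n 𝕜 : Type*} [Fintype n] [RCLike 𝕜]

lemma re_star_dotProduct_self (v : n → 𝕜) :
    RCLike.re (star v ⬝ᵥ v) = ‖WithLp.toLp 2 v‖ ^ 2 := by
  rw [← inner_self_eq_norm_sq (𝕜 := 𝕜), EuclideanSpace.inner_toLp_toLp, dotProduct_comm]

lemma norm_star_dotProduct_mulVec_le [DecidableEq n] (A : Matrix n n 𝕜) (u v : n → 𝕜) :
    ‖star u ⬝ᵥ A *ᵥ v‖ ≤
      ‖WithLp.toLp 2 u‖ * (‖toEuclideanCLM (𝕜 := 𝕜) A‖ * ‖WithLp.toLp 2 v‖) := by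
  have h : star u ⬝ᵥ A *ᵥ v =
      inner 𝕜 (WithLp.toLp 2 u) (toEuclideanCLM (𝕜 := 𝕜) A (WithLp.toLp 2 v)) := by
    rw [toEuclideanCLM_toLp, EuclideanSpace.inner_toLp_toLp, dotProduct_comm]
  rw [h]
  exact (norm_inner_le_norm _ _).trans
    (mul_le_mul_of_nonneg_left (ContinuousLinearMap.le_opNorm _ _) (norm_nonneg _))

lemma IsHermitian.algebraMap_iInf_eigenvalues_le [DecidableEq n] {A : Matrix n n 𝕜}
    (hA : A.IsHermitian) : algebraMap ℝ (Matrix n n 𝕜) (⨅ i, hA.eigenvalues i) ≤ A := by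
  refine algebraMap_le_of_le_spectrum (fun x hx => ?_) hA.isSelfAdjoint
  obtain ⟨i, rfl⟩ := hA.spectrum_real_eq_range_eigenvalues ▸ hx
  exact ciInf_le (Set.finite_range _).bddBelow i

lemma IsHermitian.iInf_eigenvalues_mul_sq_le [DecidableEq n] {A : Matrix n n 𝕜}
    (hA : A.IsHermitian) (v : n → 𝕜) :
    (⨅ i, hA.eigenvalues i) * ‖WithLp.toLp 2 v‖ ^ 2 ≤
      RCLike.re (star v ⬝ᵥ A *ᵥ v) := by
  have h := (le_iff.mp hA.algebraMap_iInf_eigenvalues_le).re_dotProduct_nonneg v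
  rw [← re_star_dotProduct_self]
  simpa [sub_mulVec, Algebra.algebraMap_eq_smul_one, smul_mulVec, dotProduct_smul,
    RCLike.smul_re] using h

lemma star_mulVec_dotProduct_mulVec_mulVec (A B : Matrix n n 𝕜) (v : n → 𝕜) :
    star (B *ᵥ v) ⬝ᵥ A *ᵥ (B *ᵥ v) = star v ⬝ᵥ (Bᴴ * A * B) *ᵥ v := by
  rw [star_mulVec, ← dotProduct_mulVec, ← mulVec_mulVec, ← mulVec_mulVec]

lemma IsHermitian.re_dotProduct_add_mul_add_conjTranspose_mul {X : Matrix n n 𝕜}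
    (hX : X.IsHermitian) (W Δ : Matrix n n 𝕜) (v : n → 𝕜) :
    RCLike.re (star v ⬝ᵥ (W + X * Δ + Δᴴ * X) *ᵥ v) =
      RCLike.re (star v ⬝ᵥ W *ᵥ v) + 2 * RCLike.re (star (X *ᵥ v) ⬝ᵥ Δ *ᵥ v) := by
  have hXΔ : star v ⬝ᵥ (X * Δ) *ᵥ v = star (X *ᵥ v) ⬝ᵥ Δ *ᵥ v := by
    rw [← mulVec_mulVec, dotProduct_mulVec, star_mulVec, hX.eq]
  have hΔX : star v ⬝ᵥ (Δᴴ * X) *ᵥ v = star (star (X *ᵥ v) ⬝ᵥ Δ *ᵥ v) := by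
    rw [← mulVec_mulVec, dotProduct_mulVec, star_dotProduct, star_mulVec, ← star_mulVec,
      star_star]
  rw [add_mulVec, add_mulVec, dotProduct_add, dotProduct_add, hXΔ, hΔX, map_add, map_add,
    RCLike.star_def, RCLike.conj_re]
  ring

end Matrix

lemma sqrt_mul_sqrt_le_of_mul_sq_le {a b d s t Q : ℝ} (hs : 0 < s) (ht : 0 < t) (hQ : 0 ≤ Q)
    (has : a * s ^ 2 ≤ Q) (hbt : b * t ^ 2 ≤ Q) (hQst : Q ≤ 2 * d * (s * t)) :
    √a * √b ≤ 2 * d := by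
  have hsa : √a * s ≤ √Q := by
    simpa [Real.sqrt_mul' a (sq_nonneg s), Real.sqrt_sq hs.le] using Real.sqrt_le_sqrt has
  have htb : √b * t ≤ √Q := by
    simpa [Real.sqrt_mul' b (sq_nonneg t), Real.sqrt_sq ht.le] using Real.sqrt_le_sqrt hbt
  refine le_of_mul_le_mul_right ?_ (mul_pos hs ht)
  calc √a * √b * (s * t) = (√a * s) * (√b * t) := by ring
    _ ≤ √Q * √Q := mul_le_mul hsa htb (by positivity) (Real.sqrt_nonneg Q)
    _ = Q := Real.mul_self_sqrt hQ
    _ ≤ 2 * d * (s * t) := hQst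

theorem stmt11 {N : ℕ} (What Xhat : Matrix (Fin N) (Fin N) ℂ)
    (hW : What.PosDef) (hX : Xhat.PosDef)
    (hH : (Xhat⁻¹ * What * Xhat⁻¹).IsHermitian)
    (Δ : Matrix (Fin N) (Fin N) ℂ)
    (hsing : (What + Xhat * Δ + Δᴴ * Xhat).det = 0) :
    Real.sqrt (⨅ i, hW.1.eigenvalues i) * Real.sqrt (⨅ i, hH.eigenvalues i) / 2 ≤
      specNorm Δ := by
  obtain ⟨v, hv, hMv⟩ := exists_mulVec_eq_zero_iff.mpr hsing
  set u := Xhat *ᵥ v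
  have hu : u ≠ 0 := fun h =>
    hv (mulVec_injective_of_isUnit hX.isUnit (h.trans (mulVec_zero _).symm))
  have hWu : star u ⬝ᵥ (Xhat⁻¹ * What * Xhat⁻¹) *ᵥ u = star v ⬝ᵥ What *ᵥ v := by
    have hdet : IsUnit Xhat.det := hX.isUnit.map detMonoidHom
    rw [star_mulVec_dotProduct_mulVec_mulVec, hX.1.eq, ← Matrix.mul_assoc, ← Matrix.mul_assoc,
      mul_nonsing_inv _ hdet, Matrix.one_mul, Matrix.mul_assoc, nonsing_inv_mul _ hdet,
      Matrix.mul_one]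
  have hQΔ : RCLike.re (star v ⬝ᵥ What *ᵥ v) ≤
      2 * specNorm Δ * (‖WithLp.toLp 2 v‖ * ‖WithLp.toLp 2 u‖) := by
    calc RCLike.re (star v ⬝ᵥ What *ᵥ v) = -2 * RCLike.re (star u ⬝ᵥ Δ *ᵥ v) := by
          have h := hX.1.re_dotProduct_add_mul_add_conjTranspose_mul What Δ v
          rw [hMv, dotProduct_zero, map_zero] at h
          linarith
      _ ≤ 2 * ‖star u ⬝ᵥ Δ *ᵥ v‖ := by
        linarith [(abs_le.1 (RCLike.abs_re_le_norm (star u ⬝ᵥ Δ *ᵥ v))).1]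
      _ ≤ 2 * (‖WithLp.toLp 2 u‖ * (specNorm Δ * ‖WithLp.toLp 2 v‖)) := by
        gcongr
        exact norm_star_dotProduct_mulVec_le Δ u v
      _ = 2 * specNorm Δ * (‖WithLp.toLp 2 v‖ * ‖WithLp.toLp 2 u‖) := by ring
  have hαβ := sqrt_mul_sqrt_le_of_mul_sq_le (by simpa using hv) (by simpa using hu)
    (hW.re_dotProduct_pos hv).le (hW.1.iInf_eigenvalues_mul_sq_le v)
    (hWu ▸ hH.iInf_eigenvalues_mul_sq_le u) hQΔ
  linarith
end

section
/- Given Hermitian positive definite Ŵ, X̂, there exists a rank-one perturbation Δ with ‖Δ‖₂ = ‖Δ‖_F ≤ αβ/(1 + |vᴴw|) such that Ŵ + X̂Δ + ΔᴴX̂ is singular, where α² = λ_min(Ŵ), β² = λ_min(X̂⁻¹ŴX̂⁻¹), v is a unit eigenvector of Ŵ^{-1/2} for eigenvalue 1/α (i.e. Ŵ^{-1/2}v = v/α), and w is the unit vector with Ŵ^{-1/2}X̂u = w/β for a unit eigenvector u of X̂Ŵ⁻¹X̂ for its smallest-related eigenvalue. -/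
open Matrix
open scoped ComplexOrder

/-- The Frobenius norm of a complex matrix. -/
noncomputable def frobNorm {α β : Type*} [Fintype α] [Fintype β] (M : Matrix α β ℂ) : ℝ :=
  Real.sqrt (∑ i, ∑ j, ‖M i j‖ ^ 2)

/-- The positive semidefinite square root of a positive semidefinite matrix, with the meaning
of the former `Matrix.PosSemidef.sqrt`. -/
noncomputable def psdSqrt {n 𝕜 : Type*} [Fintype n] [DecidableEq n] [RCLike 𝕜]
    {A : Matrix n n 𝕜} (hA : A.PosSemidef) : Matrix n n 𝕜 :=
  (hA.1.eigenvectorUnitary : Matrix n n 𝕜) *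
    diagonal (fun i => ((Real.sqrt (hA.1.eigenvalues i) : ℝ) : 𝕜)) *
    (star hA.1.eigenvectorUnitary : Matrix n n 𝕜)

/-!
Conjugate by `P = Ŵ^{-1/2}`. For `Δ = c • u vᴴ`, the hypotheses on `v` and `w` say
`P v = v / α` and `P X̂ u = w / β`, so `P (Ŵ + X̂Δ + ΔᴴX̂) P = 1 + B + Bᴴ` with
`B = t • w vᴴ`, `t = c / (αβ)`. Writing `a = vᴴw` and choosing a unimodular `e` with `e a = |a|`,
the choice `t = -e / (1 + |a|)` makes `v + e w` a null vector of `1 + B + Bᴴ`. Being of rank one,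
`Δ` has spectral and Frobenius norm both equal to `|c| = αβ / (1 + |a|)`.
-/

open scoped MatrixOrder
open InnerProductSpace WithLp

section psdSqrt

variable {n 𝕜 : Type*} [Fintype n] [DecidableEq n] [RCLike 𝕜] {A : Matrix n n 𝕜}

theorem psdSqrt_eq_sqrt (hA : A.PosSemidef) : psdSqrt hA = CFC.sqrt A := by
  rw [CFC.sqrt_eq_cfc, cfc_nnreal_eq_real _ A, hA.1.cfc_eq, IsHermitian.cfc,
    Unitary.conjStarAlgAut_apply, psdSqrt]
  congr 3
  ext i
  simp [max_eq_left (hA.eigenvalues_nonneg i)]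

theorem psdSqrt_mul_self (hA : A.PosSemidef) : psdSqrt hA * psdSqrt hA = A := by
  rw [psdSqrt_eq_sqrt, CFC.sqrt_mul_sqrt_self A hA.nonneg]

theorem isHermitian_psdSqrt (hA : A.PosSemidef) : (psdSqrt hA).IsHermitian := by
  rw [psdSqrt_eq_sqrt]
  exact (CFC.sqrt_nonneg A).posSemidef.isHermitian

theorem isUnit_det_psdSqrt (hA : A.PosDef) : IsUnit (psdSqrt hA.posSemidef).det := by
  have h : IsUnit (psdSqrt hA.posSemidef * psdSqrt hA.posSemidef).det := by
    rw [psdSqrt_mul_self]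
    exact hA.det_pos.ne'.isUnit
  rw [det_mul] at h
  exact isUnit_of_mul_isUnit_left h

theorem inv_psdSqrt_mul_mul_inv_psdSqrt (hA : A.PosDef) :
    (psdSqrt hA.posSemidef)⁻¹ * A * (psdSqrt hA.posSemidef)⁻¹ = 1 := by
  have hQ := isUnit_det_psdSqrt hA
  have hQQ := psdSqrt_mul_self hA.posSemidef
  set Q := psdSqrt hA.posSemidef
  calc Q⁻¹ * A * Q⁻¹ = Q⁻¹ * Q * (Q * Q⁻¹) := by rw [← hQQ]; simp only [mul_assoc]
    _ = 1 := by rw [nonsing_inv_mul _ hQ, mul_nonsing_inv _ hQ, one_mul]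

end psdSqrt

theorem rank_vecMulVec_eq_one {m n K : Type*} [Fintype n] [Field K] {x : m → K} {y : n → K}
    (hx : x ≠ 0) (hy : y ≠ 0) : (vecMulVec x y).rank = 1 := by
  classical
  refine le_antisymm (rank_vecMulVec_le x y) (Nat.one_le_iff_ne_zero.2 ?_)
  rw [rank, Ne, Submodule.finrank_eq_zero, LinearMap.range_eq_bot]
  intro h
  obtain ⟨i, hi⟩ := Function.ne_iff.1 hx
  obtain ⟨j, hj⟩ := Function.ne_iff.1 hy
  have h0 : vecMulVec x y = 0 := toLin'.injective (by rw [toLin'_apply', h, map_zero])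
  exact mul_ne_zero hi hj (by simpa [vecMulVec_apply] using congrFun₂ h0 i j)

theorem frobNorm_vecMulVec_star {m n : Type*} [Fintype m] [Fintype n] (x : m → ℂ) (y : n → ℂ) :
    frobNorm (vecMulVec x (star y)) = ‖toLp 2 x‖ * ‖toLp 2 y‖ := by
  simp only [frobNorm, EuclideanSpace.norm_eq, vecMulVec_apply, Pi.star_apply, norm_mul,
    norm_star, mul_pow, ← Finset.sum_mul_sum]
  exact Real.sqrt_mul (Finset.sum_nonneg fun i _ => by positivity) _

theorem toEuclideanCLM_vecMulVec_star {n : Type*} [Fintype n] [DecidableEq n] (x y : n → ℂ) :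
    toEuclideanCLM (𝕜 := ℂ) (vecMulVec x (star y)) = rankOne ℂ (toLp 2 x) (toLp 2 y) := by
  ext z i
  simp [rankOne_def, vecMulVec_mulVec, EuclideanSpace.inner_eq_star_dotProduct, dotProduct_comm,
    mul_comm]

theorem specNorm_vecMulVec_star {N : ℕ} (x y : Fin N → ℂ) :
    specNorm (vecMulVec x (star y)) = ‖toLp 2 x‖ * ‖toLp 2 y‖ := by
  rw [specNorm, toEuclideanCLM_vecMulVec_star, norm_rankOne]

theorem norm_toLp_eq_one {n : Type*} [Fintype n] {x : n → ℂ} (hx : star x ⬝ᵥ x = 1) :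
    ‖toLp 2 x‖ = 1 := by
  have h : ‖toLp 2 x‖ ^ 2 = 1 := by
    rw [← inner_self_eq_norm_sq (𝕜 := ℂ), EuclideanSpace.inner_toLp_toLp, dotProduct_comm, hx,
      RCLike.one_re]
  exact (pow_eq_one_iff_of_nonneg (norm_nonneg _) two_ne_zero).1 h

theorem exists_norm_eq_one_mul_eq_norm (a : ℂ) : ∃ e : ℂ, ‖e‖ = 1 ∧ e * a = ‖a‖ := by
  refine ⟨Complex.exp (-(a.arg : ℂ) * Complex.I),
    by simpa using Complex.norm_exp_ofReal_mul_I (-a.arg), ?_⟩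
  conv_lhs => rw [← Complex.norm_mul_exp_arg_mul_I a]
  rw [mul_left_comm, ← Complex.exp_add]
  simp

theorem det_one_add_vecMulVec_add_conjTranspose_eq_zero {n : Type*} [Fintype n] [DecidableEq n]
    {v w : n → ℂ} {e t : ℂ} (hv : star v ⬝ᵥ v = 1) (hw : star w ⬝ᵥ w = 1) (he : ‖e‖ = 1)
    (hea : e * (star v ⬝ᵥ w) = ‖star v ⬝ᵥ w‖) (ht : t * (1 + ‖star v ⬝ᵥ w‖) = -e) :
    (1 + vecMulVec (t • w) (star v) + (vecMulVec (t • w) (star v))ᴴ).det = 0 := by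
  set a := star v ⬝ᵥ w
  have hpos : (1 + ‖a‖ : ℂ) ≠ 0 := by exact_mod_cast (by positivity : (1 + ‖a‖ : ℝ) ≠ 0)
  have hee : star e * e = 1 := by
    rw [Complex.star_def, ← Complex.normSq_eq_conj_mul_self, Complex.normSq_eq_norm_sq, he]
    norm_num
  have hea' : star e * star a = ‖a‖ := by
    rw [← star_mul', hea, Complex.star_def, Complex.conj_ofReal]
  have ht' : star t * (1 + ‖a‖) = -star e := by
    simpa [Complex.star_def] using congrArg star ht
  have hdot_v : star v ⬝ᵥ (v + e • w) = 1 + ‖a‖ := by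
    rw [dotProduct_add, dotProduct_smul, hv, smul_eq_mul, hea]
  have hdot_w : star (t • w) ⬝ᵥ (v + e • w) = -1 := by
    have hwv : star w ⬝ᵥ v = star a := by rw [Matrix.star_dotProduct]
    rw [star_smul, smul_dotProduct, dotProduct_add, dotProduct_smul, hwv, hw, smul_eq_mul,
      smul_eq_mul, mul_one]
    refine mul_right_cancel₀ hpos ?_
    linear_combination (star a + e) * ht' - hea' - hee
  rw [← exists_mulVec_eq_zero_iff]
  refine ⟨v + e • w, fun h => hpos ?_, ?_⟩
  · rw [← hdot_v, h, dotProduct_zero]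
  · rw [conjTranspose_vecMulVec, star_star, add_mulVec, add_mulVec, one_mulVec, vecMulVec_mulVec,
      vecMulVec_mulVec, hdot_v, hdot_w, op_smul_eq_smul, op_smul_eq_smul]
    linear_combination (norm := module) ht • w

theorem exists_det_one_add_vecMulVec_add_conjTranspose_eq_zero {n : Type*} [Fintype n]
    [DecidableEq n] {v w : n → ℂ} (hv : star v ⬝ᵥ v = 1) (hw : star w ⬝ᵥ w = 1) :
    ∃ t : ℂ, ‖t‖ = (1 + ‖star v ⬝ᵥ w‖)⁻¹ ∧
      (1 + vecMulVec (t • w) (star v) + (vecMulVec (t • w) (star v))ᴴ).det = 0 := by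
  obtain ⟨e, he, hea⟩ := exists_norm_eq_one_mul_eq_norm (star v ⬝ᵥ w)
  have hpos : 0 < 1 + ‖star v ⬝ᵥ w‖ := by positivity
  have hposC : (1 + ‖star v ⬝ᵥ w‖ : ℂ) ≠ 0 := by exact_mod_cast hpos.ne'
  refine ⟨-e / (1 + ‖star v ⬝ᵥ w‖), ?_,
    det_one_add_vecMulVec_add_conjTranspose_eq_zero hv hw he hea (div_mul_cancel₀ _ hposC)⟩
  have h1a : ‖(1 + ‖star v ⬝ᵥ w‖ : ℂ)‖ = 1 + ‖star v ⬝ᵥ w‖ := by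
    exact_mod_cast Complex.norm_of_nonneg hpos.le
  rw [norm_div, norm_neg, he, h1a, one_div]

theorem mul_mul_vecMulVec_star_mul {R n : Type*} [CommRing R] [StarRing R] [Fintype n]
    {P : Matrix n n R} (hP : P.IsHermitian) (X : Matrix n n R) (x y : n → R) :
    P * X * vecMulVec x (star y) * P = vecMulVec (P *ᵥ X *ᵥ x) (star (P *ᵥ y)) := by
  rw [mul_vecMulVec, vecMulVec_mul, star_mulVec, hP.eq, mulVec_mulVec]

theorem det_add_mul_add_conjTranspose_mul_eq_zero {R n : Type*} [CommRing R] [IsDomain R]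
    [StarRing R] [Fintype n] [DecidableEq n] {W X Δ P : Matrix n n R} (hX : X.IsHermitian)
    (hP : P.IsHermitian) (hPdet : P.det ≠ 0)
    (h : (P * W * P + P * X * Δ * P + (P * X * Δ * P)ᴴ).det = 0) :
    (W + X * Δ + Δᴴ * X).det = 0 := by
  have hcongr : P * (W + X * Δ + Δᴴ * X) * P = P * W * P + P * X * Δ * P + (P * X * Δ * P)ᴴ := by
    simp only [conjTranspose_mul, hX.eq, hP.eq, mul_add, add_mul, Matrix.mul_assoc]
  rw [← hcongr, det_mul, det_mul] at h
  simpa [hPdet] using h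

theorem stmt12_general {N : ℕ} (What Xhat : Matrix (Fin N) (Fin N) ℂ)
    (hW : What.PosDef) (hX : Xhat.PosDef)
    (α β : ℝ) (hα0 : 0 < α) (hβ0 : 0 < β)
    (v u w : Fin N → ℂ)
    (hv1 : star v ⬝ᵥ v = 1) (hu1 : star u ⬝ᵥ u = 1) (hw1 : star w ⬝ᵥ w = 1)
    (hv : (psdSqrt hW.posSemidef)⁻¹ *ᵥ v = ((1 / α : ℝ) : ℂ) • v)
    (hw : (psdSqrt hW.posSemidef)⁻¹ *ᵥ (Xhat *ᵥ u) = ((1 / β : ℝ) : ℂ) • w) :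
    ∃ Δ : Matrix (Fin N) (Fin N) ℂ,
      Δ.rank = 1 ∧
      specNorm Δ = frobNorm Δ ∧
      specNorm Δ ≤ α * β / (1 + ‖star v ⬝ᵥ w‖) ∧
      (What + Xhat * Δ + Δᴴ * Xhat).det = 0 := by
  obtain ⟨t, ht, hsing⟩ := exists_det_one_add_vecMulVec_add_conjTranspose_eq_zero hv1 hw1
  have hP := (isHermitian_psdSqrt hW.posSemidef).inv
  set Δ := vecMulVec ((((α * β : ℝ) : ℂ) * t) • u) (star v)
  have hB : (psdSqrt hW.posSemidef)⁻¹ * Xhat * Δ * (psdSqrt hW.posSemidef)⁻¹ =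
      vecMulVec (t • w) (star v) := by
    rw [mul_mul_vecMulVec_star_mul hP, mulVec_smul, mulVec_smul, hw, hv]
    simp only [star_smul, RCLike.star_def, Complex.conj_ofReal, vecMulVec_smul, smul_vecMulVec,
      smul_smul]
    congr 1
    push_cast
    field_simp
  have hspec : specNorm Δ = α * β / (1 + ‖star v ⬝ᵥ w‖) := by
    rw [specNorm_vecMulVec_star, toLp_smul, norm_smul, norm_toLp_eq_one hu1,
      norm_toLp_eq_one hv1, norm_mul, ht, Complex.norm_real, Real.norm_of_nonneg (by positivity)]
    ring
  have ht0 : t ≠ 0 := norm_pos_iff.1 (by rw [ht]; positivity)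
  have hc : ((α * β : ℝ) : ℂ) * t ≠ 0 :=
    mul_ne_zero (by exact_mod_cast (mul_pos hα0 hβ0).ne') ht0
  refine ⟨Δ, rank_vecMulVec_eq_one (smul_ne_zero hc (by rintro rfl; simp at hu1))
    (star_ne_zero.2 (by rintro rfl; simp at hv1)),
    by rw [specNorm_vecMulVec_star, frobNorm_vecMulVec_star], hspec.le, ?_⟩
  refine det_add_mul_add_conjTranspose_mul_eq_zero hX.1 hP
    (isUnit_nonsing_inv_det _ (isUnit_det_psdSqrt hW)).ne_zero ?_
  rwa [inv_psdSqrt_mul_mul_inv_psdSqrt hW, hB]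

theorem stmt12 {N : ℕ} (What Xhat : Matrix (Fin N) (Fin N) ℂ)
    (hW : What.PosDef) (hX : Xhat.PosDef)
    (hH : (Xhat⁻¹ * What * Xhat⁻¹).IsHermitian)
    (α β : ℝ) (hα0 : 0 < α) (hβ0 : 0 < β)
    (hα : α ^ 2 = ⨅ i, hW.1.eigenvalues i)
    (hβ : β ^ 2 = ⨅ i, hH.eigenvalues i)
    (v u w : Fin N → ℂ)
    (hv1 : star v ⬝ᵥ v = 1) (hu1 : star u ⬝ᵥ u = 1) (hw1 : star w ⬝ᵥ w = 1)
    (hv : (psdSqrt hW.posSemidef)⁻¹ *ᵥ v = ((1 / α : ℝ) : ℂ) • v)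
    (hu : (Xhat * What⁻¹ * Xhat) *ᵥ u = ((1 / β ^ 2 : ℝ) : ℂ) • u)
    (hw : (psdSqrt hW.posSemidef)⁻¹ *ᵥ (Xhat *ᵥ u) = ((1 / β : ℝ) : ℂ) • w) :
    ∃ Δ : Matrix (Fin N) (Fin N) ℂ,
      Δ.rank = 1 ∧
      specNorm Δ = frobNorm Δ ∧
      specNorm Δ ≤ α * β / (1 + ‖star v ⬝ᵥ w‖) ∧
      (What + Xhat * Δ + Δᴴ * Xhat).det = 0 :=
  stmt12_general What Xhat hW hX α β hα0 hβ0 v u w hv1 hu1 hw1 hv hw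
end

section
/- Let R be Hermitian with spectral decomposition Uᴴ R U = diag(D₁, -D₂) where D₁ > 0 diagonal and D₂ ≥ 0 diagonal (U unitary). Then ΔR := U diag(0, D₂) Uᴴ is a minimum-Frobenius-norm Hermitian perturbation such that R + ΔR is positive semidefinite; i.e., for every matrix E with R + E positive semidefinite, ‖E‖_F ≥ ‖ΔR‖_F. -/
/-!
Conjugation by the unitary `U` preserves both positive semidefiniteness and the Frobenius norm,
so it suffices to treat `R = diagonal d` with `d` real. If `diagonal d + F ⪰ 0`, its diagonal
entries give `-d i ≤ re (F i i)`, hence `(d i)⁻ ≤ ‖F i i‖`, and the Frobenius norm of `F` is at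
least that of its diagonal, i.e. of `diagonal d⁻`. Conversely `diagonal d + diagonal d⁻ =
diagonal d⁺ ⪰ 0`. In the block decomposition, `d = (d₁, -d₂)` has negative part `(0, d₂)`.
-/

open Matrix
open scoped ComplexOrder

theorem sum_norm_sq_eq_trace_conjTranspose_mul_self {m n : Type*} [Fintype m] [Fintype n]
    (M : Matrix m n ℂ) : ((∑ i, ∑ j, ‖M i j‖ ^ 2 : ℝ) : ℂ) = (Mᴴ * M).trace := by
  simp only [trace, diag, mul_apply, conjTranspose_apply]
  rw [Finset.sum_comm]
  push_cast
  refine Finset.sum_congr rfl fun i _ => Finset.sum_congr rfl fun j _ => ?_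
  rw [Complex.star_def, ← Complex.normSq_eq_conj_mul_self, Complex.normSq_eq_norm_sq]
  norm_cast

theorem sum_norm_sq_diag_le {n : Type*} [Fintype n] (M : Matrix n n ℂ) :
    ∑ i, ‖M i i‖ ^ 2 ≤ ∑ i, ∑ j, ‖M i j‖ ^ 2 :=
  Finset.sum_le_sum fun i _ =>
    Finset.single_le_sum (f := fun j => ‖M i j‖ ^ 2) (fun _ _ => by positivity) (Finset.mem_univ i)

theorem posSemidef_diagonal_add_diagonal_negPart {n : Type*} [DecidableEq n] (d : n → ℝ) :
    (diagonal (fun i => (d i : ℂ)) + diagonal fun i => (((d i)⁻ : ℝ) : ℂ)).PosSemidef := by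
  rw [diagonal_add, posSemidef_diagonal_iff]
  intro i
  have h : d i + (d i)⁻ = (d i)⁺ := (sub_eq_iff_eq_add.mp (posPart_sub_negPart (d i))).symm
  exact_mod_cast h ▸ posPart_nonneg (d i)

section

variable {n : Type*} [Fintype n] [DecidableEq n]

theorem frobNorm_diagonal (v : n → ℂ) :
    frobNorm (diagonal v) = Real.sqrt (∑ i, ‖v i‖ ^ 2) := by
  simp [frobNorm, diagonal_apply, apply_ite]

theorem frobNorm_mul_mul_conjTranspose {U : Matrix n n ℂ} (hU : Uᴴ * U = 1) (M : Matrix n n ℂ) :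
    frobNorm (U * M * Uᴴ) = frobNorm M := by
  have hconj : (U * M * Uᴴ)ᴴ * (U * M * Uᴴ) = U * (Mᴴ * M) * Uᴴ := by
    simp only [conjTranspose_mul, conjTranspose_conjTranspose, Matrix.mul_assoc]
    rw [← Matrix.mul_assoc Uᴴ U, hU, Matrix.one_mul]
  unfold frobNorm
  congr 1
  apply Complex.ofReal_injective
  rw [sum_norm_sq_eq_trace_conjTranspose_mul_self, sum_norm_sq_eq_trace_conjTranspose_mul_self,
    hconj, trace_mul_comm, ← Matrix.mul_assoc, hU, Matrix.one_mul]

theorem frobNorm_diagonal_negPart_le (d : n → ℝ) {F : Matrix n n ℂ}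
    (hF : (diagonal (fun i => (d i : ℂ)) + F).PosSemidef) :
    frobNorm (diagonal fun i => (((d i)⁻ : ℝ) : ℂ)) ≤ frobNorm F := by
  have hdiag : ∀ i, (d i)⁻ ≤ ‖F i i‖ := by
    intro i
    have h := (Complex.le_def.mp (hF.diag_nonneg (i := i))).1
    simp only [Complex.zero_re, Matrix.add_apply, diagonal_apply_eq, Complex.add_re,
      Complex.ofReal_re] at h
    rw [negPart_def]
    exact max_le (by linarith [Complex.re_le_norm (F i i)]) (norm_nonneg _)
  rw [frobNorm_diagonal]
  refine Real.sqrt_le_sqrt ?_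
  calc ∑ i, ‖(((d i)⁻ : ℝ) : ℂ)‖ ^ 2 = ∑ i, ((d i)⁻) ^ 2 := by
        simp [abs_of_nonneg (negPart_nonneg _)]
    _ ≤ ∑ i, ‖F i i‖ ^ 2 :=
        Finset.sum_le_sum fun i _ => pow_le_pow_left₀ (negPart_nonneg _) (hdiag i) 2
    _ ≤ _ := sum_norm_sq_diag_le F

variable {U : Matrix n n ℂ} (d : n → ℝ)

theorem posSemidef_conj_diagonal_add_conj_diagonal_negPart :
    (U * diagonal (fun i => (d i : ℂ)) * Uᴴ +
      U * diagonal (fun i => (((d i)⁻ : ℝ) : ℂ)) * Uᴴ).PosSemidef := by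
  rw [← Matrix.add_mul, ← Matrix.mul_add]
  exact (posSemidef_diagonal_add_diagonal_negPart d).mul_mul_conjTranspose_same U

theorem frobNorm_conj_diagonal_negPart_le (hU : Uᴴ * U = 1 ∧ U * Uᴴ = 1) {E : Matrix n n ℂ}
    (hE : (U * diagonal (fun i => (d i : ℂ)) * Uᴴ + E).PosSemidef) :
    frobNorm (U * diagonal (fun i => (((d i)⁻ : ℝ) : ℂ)) * Uᴴ) ≤ frobNorm E := by
  have hconj : Uᴴ * (U * diagonal (fun i => (d i : ℂ)) * Uᴴ + E) * U =
      diagonal (fun i => (d i : ℂ)) + Uᴴ * E * U := by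
    rw [Matrix.mul_add, Matrix.add_mul]
    simp only [← Matrix.mul_assoc, hU.1, Matrix.one_mul]
    rw [Matrix.mul_assoc _ Uᴴ U, hU.1, Matrix.mul_one]
  have hF := hconj ▸ hE.conjTranspose_mul_mul_same U
  calc frobNorm (U * diagonal (fun i => (((d i)⁻ : ℝ) : ℂ)) * Uᴴ)
      = frobNorm (diagonal (fun i => (((d i)⁻ : ℝ) : ℂ))) := frobNorm_mul_mul_conjTranspose hU.1 _
    _ ≤ frobNorm (Uᴴ * E * U) := frobNorm_diagonal_negPart_le d hF
    _ = frobNorm E := by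
      simpa using frobNorm_mul_mul_conjTranspose (U := Uᴴ) (by simpa using hU.2) E

end

theorem stmt16_general {N₁ N₂ : ℕ}
    (R : Matrix (Fin N₁ ⊕ Fin N₂) (Fin N₁ ⊕ Fin N₂) ℂ)
    (U : Matrix (Fin N₁ ⊕ Fin N₂) (Fin N₁ ⊕ Fin N₂) ℂ)
    (hU : Uᴴ * U = 1 ∧ U * Uᴴ = 1)
    (d₁ : Fin N₁ → ℝ) (d₂ : Fin N₂ → ℝ)
    (hd₁ : ∀ i, 0 < d₁ i) (hd₂ : ∀ i, 0 ≤ d₂ i)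
    (hdec : Uᴴ * R * U =
      Matrix.fromBlocks (Matrix.diagonal fun i => (d₁ i : ℂ)) 0 0
        (-(Matrix.diagonal fun i => (d₂ i : ℂ)))) :
    (R + U * Matrix.fromBlocks 0 0 0 (Matrix.diagonal fun i => (d₂ i : ℂ)) * Uᴴ).PosSemidef ∧
    ∀ E : Matrix (Fin N₁ ⊕ Fin N₂) (Fin N₁ ⊕ Fin N₂) ℂ, (R + E).PosSemidef →
      frobNorm (U * Matrix.fromBlocks 0 0 0 (Matrix.diagonal fun i => (d₂ i : ℂ)) * Uᴴ) ≤
        frobNorm E := by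
  set d : Fin N₁ ⊕ Fin N₂ → ℝ := Sum.elim d₁ (-d₂)
  have hblocks : Matrix.fromBlocks (Matrix.diagonal fun i => (d₁ i : ℂ)) 0 0
      (-(Matrix.diagonal fun i => (d₂ i : ℂ))) = diagonal fun p => (d p : ℂ) := by
    rw [diagonal_neg, fromBlocks_diagonal]
    congr 1; ext (i | i) <;> simp [d]
  have hnegPart : Matrix.fromBlocks 0 0 0 (Matrix.diagonal fun i => (d₂ i : ℂ)) =
      diagonal fun p => (((d p)⁻ : ℝ) : ℂ) := by
    rw [← diagonal_zero, fromBlocks_diagonal]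
    congr 1; ext (i | i)
    · simp [d, negPart_eq_zero.mpr (hd₁ i).le]
    · simp [d, negPart_eq_neg.mpr (neg_nonpos.mpr (hd₂ i))]
  have hR : R = U * diagonal (fun p => (d p : ℂ)) * Uᴴ :=
    calc R = U * Uᴴ * R * (U * Uᴴ) := by rw [hU.2, Matrix.one_mul, Matrix.mul_one]
      _ = U * (Uᴴ * R * U) * Uᴴ := by simp only [Matrix.mul_assoc]
      _ = _ := by rw [hdec, hblocks]
  rw [hnegPart, hR]
  exact ⟨posSemidef_conj_diagonal_add_conj_diagonal_negPart d,
    fun E hE => frobNorm_conj_diagonal_negPart_le d hU hE⟩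

theorem stmt16 {N₁ N₂ : ℕ}
    (R : Matrix (Fin N₁ ⊕ Fin N₂) (Fin N₁ ⊕ Fin N₂) ℂ) (hR : R.IsHermitian)
    (U : Matrix (Fin N₁ ⊕ Fin N₂) (Fin N₁ ⊕ Fin N₂) ℂ)
    (hU : Uᴴ * U = 1 ∧ U * Uᴴ = 1)
    (d₁ : Fin N₁ → ℝ) (d₂ : Fin N₂ → ℝ)
    (hd₁ : ∀ i, 0 < d₁ i) (hd₂ : ∀ i, 0 ≤ d₂ i)
    (hdec : Uᴴ * R * U =
      Matrix.fromBlocks (Matrix.diagonal fun i => (d₁ i : ℂ)) 0 0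
        (-(Matrix.diagonal fun i => (d₂ i : ℂ)))) :
    (R + U * Matrix.fromBlocks 0 0 0 (Matrix.diagonal fun i => (d₂ i : ℂ)) * Uᴴ).PosSemidef ∧
    ∀ E : Matrix (Fin N₁ ⊕ Fin N₂) (Fin N₁ ⊕ Fin N₂) ℂ, (R + E).PosSemidef →
      frobNorm (U * Matrix.fromBlocks 0 0 0 (Matrix.diagonal fun i => (d₂ i : ℂ)) * Uᴴ) ≤
        frobNorm E :=
  stmt16_general R U hU d₁ d₂ hd₁ hd₂ hdec
end

section
/- Let A ∈ ℂ^{n×n}. If all eigenvalues of A have strictly negative real part, then there exists a Hermitian positive definite X with -AᴴX - XA positive definite. -/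
open Matrix
open scoped ComplexOrder

namespace Stmt19Aux

open Filter
open scoped Matrix.Norms.L2Operator Topology

variable {n : ℕ}

lemma dot_tsum (x : Fin n → ℂ) {f : ℕ → Matrix (Fin n) (Fin n) ℂ} (hf : Summable f) :
    star x ⬝ᵥ (∑' k, f k) *ᵥ x = ∑' k, star x ⬝ᵥ (f k) *ᵥ x := by
  let φ : Matrix (Fin n) (Fin n) ℂ →ₗ[ℂ] ℂ :=
    { toFun := fun M => star x ⬝ᵥ M *ᵥ x
      map_add' := fun M N => by simp [add_mulVec, dotProduct_add]
      map_smul' := fun c M => by simp [smul_mulVec, dotProduct_smul] }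
  exact (LinearMap.toContinuousLinearMap φ).map_tsum hf

lemma posSemidef_tsum {f : ℕ → Matrix (Fin n) (Fin n) ℂ} (hf : Summable f)
    (h : ∀ k, (f k).PosSemidef) : (∑' k, f k).PosSemidef := by
  rw [Matrix.posSemidef_iff_dotProduct_mulVec]
  constructor
  · show _ = _
    rw [Matrix.conjTranspose_tsum]
    exact tsum_congr fun k => (h k).1
  · intro x
    rw [dot_tsum x hf]
    exact tsum_nonneg fun k => (Matrix.posSemidef_iff_dotProduct_mulVec.mp (h k)).2 x

lemma cayley_bound {μ : ℂ} (h : ((μ + 1) / (μ - 1)).re < 0) (hμ : μ ≠ 1) : ‖μ‖₊ < 1 := by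
  have hd : 0 < Complex.normSq (μ - 1) := by
    rw [Complex.normSq_pos]
    intro hc; exact hμ (by linear_combination hc)
  have hre : ((μ + 1) / (μ - 1)).re = (Complex.normSq μ - 1) / Complex.normSq (μ - 1) := by
    rw [Complex.div_re]
    simp [Complex.normSq_apply, Complex.add_re, Complex.add_im, Complex.sub_re, Complex.sub_im]
    ring
  rw [hre] at h
  have h2 : Complex.normSq μ < 1 := by
    rcases div_neg_iff.mp h with ⟨h1, h2⟩ | ⟨h1, h2⟩ <;> linarith
  rw [← Complex.sq_norm] at h2
  have : ‖μ‖ < 1 := by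
    have := norm_nonneg μ
    nlinarith
  exact_mod_cast this

lemma cayley_spec (A : Matrix (Fin n) (Fin n) ℂ)
    (hA : ∀ μ ∈ spectrum ℂ A, μ.re < 0) (hU : IsUnit (A - 1)) (μ : ℂ)
    (hμ : μ ∈ spectrum ℂ ((A + 1) * (A - 1)⁻¹)) : ‖μ‖₊ < 1 := by
  have hdet : IsUnit (A - 1).det := (Matrix.isUnit_iff_isUnit_det _).mp hU
  have hC : (A - 1) * (A - 1)⁻¹ = 1 := Matrix.mul_nonsing_inv _ hdet
  have hCu : IsUnit ((A - 1)⁻¹) := (Matrix.isUnit_nonsing_inv_iff).mpr hU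
  rw [spectrum.mem_iff, Algebra.algebraMap_eq_smul_one] at hμ
  have key : μ • (1 : Matrix (Fin n) (Fin n) ℂ) - (A + 1) * (A - 1)⁻¹
      = (μ • (A - 1) - (A + 1)) * (A - 1)⁻¹ := by
    rw [Matrix.sub_mul, smul_mul_assoc, hC]
  rw [key] at hμ
  have hX : ¬ IsUnit (μ • (A - 1) - (A + 1)) := fun h => hμ (h.mul hCu)
  by_cases h1 : μ = 1
  · exfalso
    apply hX
    have : μ • (A - 1) - (A + 1) = (-2 : ℂ) • (1 : Matrix (Fin n) (Fin n) ℂ) := by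
      subst h1; ext i j; simp [Matrix.one_apply]; split_ifs <;> ring
    rw [this, ← Algebra.algebraMap_eq_smul_one]
    exact (isUnit_iff_ne_zero.mpr (by norm_num : (-2 : ℂ) ≠ 0)).map (algebraMap ℂ _)
  · have hμ1 : μ - 1 ≠ 0 := sub_ne_zero.mpr h1
    set c : ℂ := (μ + 1) / (μ - 1) with hc
    have hcc : (μ - 1) * c = μ + 1 := by rw [hc]; field_simp
    have hXc : μ • (A - 1) - (A + 1) = (μ - 1) • (A - c • 1) := by
      ext i j
      by_cases hij : i = j
      · subst hij
        simp only [Matrix.sub_apply, Matrix.smul_apply, Matrix.add_apply, Matrix.one_apply_eq,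
          smul_eq_mul]
        linear_combination hcc
      · simp only [Matrix.sub_apply, Matrix.smul_apply, Matrix.add_apply, Matrix.one_apply_ne hij,
          smul_eq_mul]
        ring
    have hAc : ¬ IsUnit (A - c • (1 : Matrix (Fin n) (Fin n) ℂ)) := by
      intro h
      apply hX
      rw [hXc]
      have : (μ - 1) • (A - c • (1 : Matrix (Fin n) (Fin n) ℂ))
          = ((μ - 1) • (1 : Matrix (Fin n) (Fin n) ℂ)) * (A - c • 1) := by
        rw [smul_mul_assoc, one_mul]
      rw [this, ← Algebra.algebraMap_eq_smul_one]
      exact (((isUnit_iff_ne_zero.mpr hμ1).map (algebraMap ℂ (Matrix (Fin n) (Fin n) ℂ))).mul h)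
    have hc_spec : c ∈ spectrum ℂ A := by
      rw [spectrum.mem_iff, Algebra.algebraMap_eq_smul_one]
      intro h
      exact hAc (by simpa using h.neg)
    exact cayley_bound (hA c hc_spec) h1

lemma pow_bound [Nonempty (Fin n)] (B : Matrix (Fin n) (Fin n) ℂ)
    (hB : ∀ μ ∈ spectrum ℂ B, ‖μ‖₊ < 1) :
    ∃ r : NNReal, r < 1 ∧ ∀ᶠ k in atTop, ‖B ^ k‖₊ ≤ r ^ k := by
  haveI : Nontrivial (Matrix (Fin n) (Fin n) ℂ) := by
    refine nontrivial_of_ne 0 1 fun h => ?_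
    have := congrFun (congrFun h (Classical.arbitrary _)) (Classical.arbitrary _)
    simp [Matrix.one_apply] at this
  have h1 : spectralRadius ℂ B < (1 : NNReal) := spectrum.spectralRadius_lt_of_forall_lt B hB
  obtain ⟨r, hr1, hr2⟩ := ENNReal.lt_iff_exists_nnreal_btwn.mp h1
  refine ⟨r, by exact_mod_cast hr2, ?_⟩
  have htend := spectrum.pow_nnnorm_pow_one_div_tendsto_nhds_spectralRadius B
  have hev : ∀ᶠ k : ℕ in atTop, (‖B ^ k‖₊ : ENNReal) ^ (1 / (k : ℝ)) < (r : ENNReal) :=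
    htend.eventually_lt_const hr1
  filter_upwards [hev, eventually_ge_atTop 1] with k hk hk1
  have hk0 : (k : ℝ) ≠ 0 := Nat.cast_ne_zero.mpr (by omega)
  have h2 : ((‖B ^ k‖₊ : ENNReal) ^ (1 / (k : ℝ))) ^ (k : ℝ) < (r : ENNReal) ^ (k : ℝ) :=
    ENNReal.rpow_lt_rpow hk (by positivity)
  rw [← ENNReal.rpow_mul, one_div_mul_cancel hk0, ENNReal.rpow_one] at h2
  have h3 : (‖B ^ k‖₊ : ENNReal) < ((r ^ k : NNReal) : ENNReal) := by
    rwa [ENNReal.coe_pow, ← ENNReal.rpow_natCast (r : ENNReal) k]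
  exact le_of_lt (ENNReal.coe_lt_coe.mp h3)

lemma posDef_conjTranspose_mul_self_of_isUnit (M : Matrix (Fin n) (Fin n) ℂ) (h : IsUnit M) :
    (Mᴴ * M).PosDef := by
  rw [Matrix.posDef_iff_dotProduct_mulVec]
  refine ⟨(Matrix.posSemidef_conjTranspose_mul_self M).1, fun x hx => ?_⟩
  have hy : M *ᵥ x ≠ 0 := fun h0 =>
    hx ((Matrix.mulVec_injective_iff_isUnit.mpr h) (by rw [h0, Matrix.mulVec_zero]))
  have : star x ⬝ᵥ (Mᴴ * M) *ᵥ x = star (M *ᵥ x) ⬝ᵥ (M *ᵥ x) := by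
    rw [← Matrix.mulVec_mulVec, Matrix.dotProduct_mulVec, Matrix.star_mulVec]
  rw [this]
  exact Matrix.dotProduct_star_self_pos_iff.mpr hy

lemma summable_aux (B : Matrix (Fin n) (Fin n) ℂ) (r : NNReal) (hr1 : r < 1)
    (hrev : ∀ᶠ k in atTop, ‖B ^ k‖₊ ≤ r ^ k) :
    Summable (fun k => (Bᴴ) ^ k * B ^ k) := by
  refine Summable.of_norm_bounded_eventually_nat (g := fun k => ((r : ℝ) ^ 2) ^ k)
    (summable_geometric_of_lt_one (by positivity) (by
      have : (r : ℝ) < 1 := hr1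
      nlinarith [r.coe_nonneg])) ?_
  filter_upwards [hrev] with k hk
  have h1 : ‖(Bᴴ) ^ k * B ^ k‖ ≤ ‖(Bᴴ) ^ k‖ * ‖B ^ k‖ := Matrix.l2_opNorm_mul _ _
  have h2 : ‖(Bᴴ) ^ k‖ = ‖B ^ k‖ := by
    rw [← Matrix.conjTranspose_pow, Matrix.l2_opNorm_conjTranspose]
  have h3 : ‖B ^ k‖ ≤ (r : ℝ) ^ k := by
    have h4 := NNReal.coe_le_coe.mpr hk
    rwa [coe_nnnorm, NNReal.coe_pow] at h4
  calc ‖(Bᴴ) ^ k * B ^ k‖ ≤ ‖(Bᴴ) ^ k‖ * ‖B ^ k‖ := h1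
  _ = ‖B ^ k‖ * ‖B ^ k‖ := by rw [h2]
  _ ≤ (r : ℝ) ^ k * (r : ℝ) ^ k :=
      mul_le_mul h3 h3 (norm_nonneg _) (by positivity)
  _ = ((r : ℝ) ^ 2) ^ k := by ring

lemma stein_solution [Nonempty (Fin n)] (B : Matrix (Fin n) (Fin n) ℂ)
    (hB : ∀ μ ∈ spectrum ℂ B, ‖μ‖₊ < 1) :
    ∃ X : Matrix (Fin n) (Fin n) ℂ, X.PosDef ∧ Bᴴ * X * B = X - 1 := by
  obtain ⟨r, hr1, hrev⟩ := pow_bound B hB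
  have hsum : Summable (fun k => (Bᴴ) ^ k * B ^ k) := summable_aux B r hr1 hrev
  have hsum' : Summable (fun k => (Bᴴ) ^ (k + 1) * B ^ (k + 1)) :=
    hsum.comp_injective (add_left_injective 1)
  have hsemi : ∀ k : ℕ, ((Bᴴ) ^ k * B ^ k).PosSemidef := fun k => by
    simpa only [Matrix.conjTranspose_pow] using
      Matrix.posSemidef_conjTranspose_mul_self (B ^ k)
  have hzero : (∑' k, (Bᴴ) ^ k * B ^ k)
      = 1 + ∑' k, (Bᴴ) ^ (k + 1) * B ^ (k + 1) := by
    rw [Summable.tsum_eq_zero_add hsum, pow_zero, pow_zero, one_mul]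
  refine ⟨∑' k, (Bᴴ) ^ k * B ^ k, ?_, ?_⟩
  · rw [hzero]
    exact Matrix.PosDef.add_posSemidef Matrix.PosDef.one
      (posSemidef_tsum hsum' fun k => hsemi _)
  · have h1 : Bᴴ * (∑' k, (Bᴴ) ^ k * B ^ k) * B
        = ∑' k, Bᴴ * ((Bᴴ) ^ k * B ^ k) * B := by
      rw [← hsum.tsum_mul_left Bᴴ, ← (hsum.mul_left Bᴴ).tsum_mul_right B]
    have h2 : ∀ k : ℕ, Bᴴ * ((Bᴴ) ^ k * B ^ k) * B = (Bᴴ) ^ (k + 1) * B ^ (k + 1) := fun k => by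
      rw [pow_succ' Bᴴ k, pow_succ B k]
      simp only [Matrix.mul_assoc]
    rw [h1, tsum_congr h2]
    rw [hzero]
    abel

lemma key [Nonempty (Fin n)] (A : Matrix (Fin n) (Fin n) ℂ)
    (hA : ∀ μ ∈ spectrum ℂ A, μ.re < 0) :
    ∃ X : Matrix (Fin n) (Fin n) ℂ, X.PosDef ∧ (-(Aᴴ * X) - X * A).PosDef := by
  have hU : IsUnit (A - 1) := by
    by_contra h
    have h1 : (1 : ℂ) ∈ spectrum ℂ A := by
      rw [spectrum.mem_iff, Algebra.algebraMap_eq_smul_one, one_smul]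
      intro hu
      exact h (by simpa using hu.neg)
    exact absurd (hA 1 h1) (by norm_num)
  have hdet : IsUnit (A - 1).det := (Matrix.isUnit_iff_isUnit_det _).mp hU
  have hC2 : (A - 1)⁻¹ * (A - 1) = 1 := Matrix.nonsing_inv_mul _ hdet
  obtain ⟨X, hXpos, hStein⟩ := stein_solution ((A + 1) * (A - 1)⁻¹) (cayley_spec A hA hU)
  refine ⟨X, hXpos, ?_⟩
  have hAH1 : (A - 1)ᴴ = Aᴴ - 1 := by
    rw [Matrix.conjTranspose_sub, Matrix.conjTranspose_one]
  have hUH : IsUnit (Aᴴ - 1) := by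
    rw [← hAH1]; exact (Matrix.isUnit_conjTranspose (A - 1)).mpr hU
  have hD1 : (Aᴴ - 1) * (Aᴴ - 1)⁻¹ = 1 :=
    Matrix.mul_nonsing_inv _ ((Matrix.isUnit_iff_isUnit_det _).mp hUH)
  have hBH : ((A + 1) * (A - 1)⁻¹)ᴴ = (Aᴴ - 1)⁻¹ * (Aᴴ + 1) := by
    rw [Matrix.conjTranspose_mul, Matrix.conjTranspose_nonsing_inv, hAH1,
      Matrix.conjTranspose_add, Matrix.conjTranspose_one]
  have hleft : (Aᴴ - 1) * ((A + 1) * (A - 1)⁻¹)ᴴ = Aᴴ + 1 := by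
    rw [hBH, ← Matrix.mul_assoc, hD1, Matrix.one_mul]
  have hright : ((A + 1) * (A - 1)⁻¹) * (A - 1) = A + 1 := by
    rw [Matrix.mul_assoc, hC2, Matrix.mul_one]
  have h6 : (Aᴴ + 1) * X * (A + 1) = (Aᴴ - 1) * (X - 1) * (A - 1) := by
    calc (Aᴴ + 1) * X * (A + 1)
        = ((Aᴴ - 1) * ((A + 1) * (A - 1)⁻¹)ᴴ) * X * (((A + 1) * (A - 1)⁻¹) * (A - 1)) := by
          rw [hleft, hright]
      _ = (Aᴴ - 1) * (((A + 1) * (A - 1)⁻¹)ᴴ * X * ((A + 1) * (A - 1)⁻¹)) * (A - 1) := by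
          simp only [Matrix.mul_assoc]
      _ = (Aᴴ - 1) * (X - 1) * (A - 1) := by rw [hStein]
  have h7 : (-(Aᴴ * X) - X * A) + (-(Aᴴ * X) - X * A)
      = (Aᴴ - 1) * (A - 1) + (Aᴴ - 1) * (X - 1) * (A - 1) - (Aᴴ + 1) * X * (A + 1) := by
    noncomm_ring
  rw [h6, add_sub_cancel_right] at h7
  have h8 : -(Aᴴ * X) - X * A = (2⁻¹ : ℂ) • ((A - 1)ᴴ * (A - 1)) := by
    have h9 : (2 : ℂ) • (-(Aᴴ * X) - X * A) = (A - 1)ᴴ * (A - 1) := by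
      rw [two_smul, h7, hAH1]
    rw [← h9, smul_smul]
    norm_num
  have hN : ((A - 1)ᴴ * (A - 1)).PosDef := posDef_conjTranspose_mul_self_of_isUnit _ hU
  rw [h8]
  rw [Matrix.posDef_iff_dotProduct_mulVec]
  constructor
  · show _ = _
    rw [Matrix.conjTranspose_smul, hN.1]
    congr 1
    simp
  · intro x hx
    rw [Matrix.smul_mulVec, dotProduct_smul, smul_eq_mul]
    have hc : (0 : ℂ) < 2⁻¹ := by
      rw [Complex.lt_def]
      norm_num
    exact mul_pos hc ((Matrix.posDef_iff_dotProduct_mulVec.mp hN).2 hx)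

end Stmt19Aux

theorem stmt19 {n : ℕ} (A : Matrix (Fin n) (Fin n) ℂ)
    (hA : ∀ μ ∈ spectrum ℂ A, μ.re < 0) :
    ∃ X : Matrix (Fin n) (Fin n) ℂ, X.PosDef ∧ (-(Aᴴ * X) - X * A).PosDef := by
  rcases Nat.eq_zero_or_pos n with hn | hn
  · subst hn
    have hsub : ∀ M : Matrix (Fin 0) (Fin 0) ℂ, M.PosDef := fun M =>
      ⟨by ext i j; exact i.elim0, fun x hx =>
        absurd (Finsupp.ext fun i => i.elim0) hx⟩
    exact ⟨1, hsub 1, hsub _⟩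
  · haveI : Nonempty (Fin n) := ⟨⟨0, hn⟩⟩
    exact Stmt19Aux.key A hA
end
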